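/- Let a > b > 0, c = √(a² − b²), and for z ∈ ℂ consider the quadratic polynomial p_z(ζ) = c²ζ² − 2(a+b)·z·ζ + (a+b)², whose roots are exactly the solutions ζ ≠ 0 of f(ζ) = z for the Joukowski map f(ζ) = (c²ζ² + (a+b)²)/(2(a+b)ζ). Write z = x + iy. Then: (1) if x²/a² + y²/b² < 1 (z strictly inside the ellipse), both roots of p_z (counted with multiplicity) have modulus > 1; (2) if x²/a² + y²/b² > 1 (z strictly outside the ellipse), then p_z has exactly one root of modulus > 1 and exactly one root of modulus < 1. Consequently, the counting function ρ(z) = card{ζ : |ζ| > 1, f(ζ) = z} equals 2 inside the ellipse and 1 outside it. -/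

import Mathlib

/-!
Since `c² = (a - b)(a + b)`, the map is `f ζ = ((a - b) ζ + (a + b) / ζ) / 2`, and for `ζ ≠ 0`,
with `q = |ζ|²`, the quadratic form of the ellipse satisfies
`x²/a² + y²/b² - 1 = (q - 1) ((a - b)² q - (a + b)²) · w` at `f ζ`, with `w > 0`.
So `f` maps the circles `|ζ| = 1` and `|ζ| = (a + b)/(a - b)` onto the ellipse, the annulus between
them into its interior and the rest of `ℂ ∖ {0}` outside it. By Vieta the two roots of `p_z`
satisfy `|ζ₁ ζ₂| = (a + b)/(a - b) > 1`: inside the ellipse both lie in the annulus, while outside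
one root lies in the unit disk and the other beyond the outer circle.
-/

open Polynomial

noncomputable def joukowski (a b : ℝ) (ζ : ℂ) : ℂ := (((a : ℂ) - b) * ζ + ((a : ℂ) + b) * ζ⁻¹) / 2

noncomputable def joukowskiQuadratic (a b : ℝ) (z : ℂ) : ℂ[X] :=
  C ((a : ℂ) ^ 2 - (b : ℂ) ^ 2) * X ^ 2 - C (2 * ((a : ℂ) + b) * z) * X + C (((a : ℂ) + b) ^ 2)

theorem Polynomial.exists_roots_quadratic_eq_pair {k : Type*} [Field k] [IsAlgClosed k]
    {a b c : k} (ha : a ≠ 0) : ∃ x₁ x₂, (C a * X ^ 2 + C b * X + C c).roots = {x₁, x₂} :=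
  Multiset.card_eq_two.mp (by rw [IsAlgClosed.card_roots_eq_natDegree, natDegree_quadratic ha])

theorem Multiset.card_filter_pair_of_norm_lt_one_lt {E : Type*} [Norm E] {x y : E}
    (hx : ‖x‖ < 1) (hy : 1 < ‖y‖) :
    card (({x, y} : Multiset E).filter fun ζ => 1 < ‖ζ‖) = 1 ∧
      card (({x, y} : Multiset E).filter fun ζ => ‖ζ‖ < 1) = 1 := by
  simp [Multiset.filter_singleton, hx, hy, hx.not_gt, hy.not_gt]

section

variable {a b : ℝ}

open Complex

theorem joukowski_re (a b : ℝ) (ζ : ℂ) :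
    (joukowski a b ζ).re = ζ.re * ((a - b) + (a + b) / normSq ζ) / 2 := by
  simp only [joukowski, div_ofNat_re, add_re, add_im, mul_re, sub_re, sub_im,
    ofReal_re, ofReal_im, inv_re, inv_im]
  ring

theorem joukowski_im (a b : ℝ) (ζ : ℂ) :
    (joukowski a b ζ).im = ζ.im * ((a - b) - (a + b) / normSq ζ) / 2 := by
  simp only [joukowski, div_ofNat_im, add_re, add_im, mul_im, sub_re, sub_im,
    ofReal_re, ofReal_im, inv_re, inv_im]
  ring

theorem joukowski_eq_div (hs : (a : ℂ) + b ≠ 0) (ζ : ℂ) :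
    joukowski a b ζ = (((a : ℂ) ^ 2 - (b : ℂ) ^ 2) * ζ ^ 2 + ((a : ℂ) + b) ^ 2) /
      (2 * ((a : ℂ) + b) * ζ) := by
  rcases eq_or_ne ζ 0 with rfl | hζ
  · simp [joukowski]
  · rw [joukowski]
    field_simp
    ring

theorem eval_joukowskiQuadratic_eq_zero_iff (hs : (a : ℂ) + b ≠ 0) {z ζ : ℂ} (hζ : ζ ≠ 0) :
    (joukowskiQuadratic a b z).eval ζ = 0 ↔ joukowski a b ζ = z := by
  rw [joukowski_eq_div hs, div_eq_iff (by simp [hs, hζ])]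
  simp only [joukowskiQuadratic, eval_add, eval_sub, eval_mul, eval_C, eval_pow, eval_X]
  constructor <;> intro h <;> linear_combination h

theorem ellipse_joukowski_sub_one (ha : a ≠ 0) (hb : b ≠ 0) {ζ : ℂ} (hζ : ζ ≠ 0) :
    (joukowski a b ζ).re ^ 2 / a ^ 2 + (joukowski a b ζ).im ^ 2 / b ^ 2 - 1 =
      (normSq ζ - 1) * ((a - b) ^ 2 * normSq ζ - (a + b) ^ 2) *
        ((b ^ 2 * ζ.re ^ 2 + a ^ 2 * ζ.im ^ 2) / (4 * a ^ 2 * b ^ 2 * normSq ζ ^ 2)) := by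
  have hq : normSq ζ ≠ 0 := normSq_eq_zero.not.mpr hζ
  rw [joukowski_re, joukowski_im]
  field_simp
  rw [normSq_apply]
  ring

theorem ellipse_joukowski_sub_one_eq_mul_pos (hb : 0 < b) (hba : b < a) {ζ : ℂ} (hζ : ζ ≠ 0) :
    ∃ w > 0, (joukowski a b ζ).re ^ 2 / a ^ 2 + (joukowski a b ζ).im ^ 2 / b ^ 2 - 1 =
      (‖ζ‖ ^ 2 - 1) * ((a - b) ^ 2 * ‖ζ‖ ^ 2 - (a + b) ^ 2) * w := by
  have ha : 0 < a := hb.trans hba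
  refine ⟨_, ?_, by rw [ellipse_joukowski_sub_one ha.ne' hb.ne' hζ, normSq_eq_norm_sq]⟩
  have hq : 0 < normSq ζ := normSq_pos.mpr hζ
  have hnum : 0 < b ^ 2 * ζ.re ^ 2 + a ^ 2 * ζ.im ^ 2 := by
    rcases ne_or_eq ζ.re 0 with hre | hre
    · positivity
    · have him : ζ.im ≠ 0 := fun him => hζ (Complex.ext hre him)
      positivity
  positivity

theorem one_lt_norm_of_ellipse_joukowski_lt_one (hb : 0 < b) (hba : b < a) {ζ : ℂ} (hζ : ζ ≠ 0)
    (h : (joukowski a b ζ).re ^ 2 / a ^ 2 + (joukowski a b ζ).im ^ 2 / b ^ 2 < 1) : 1 < ‖ζ‖ := by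
  obtain ⟨w, hw, hsign⟩ := ellipse_joukowski_sub_one_eq_mul_pos hb hba hζ
  by_contra! hle
  have : 0 ≤ (‖ζ‖ ^ 2 - 1) * ((a - b) ^ 2 * ‖ζ‖ ^ 2 - (a + b) ^ 2) := by
    have hlin : (a - b) * ‖ζ‖ ≤ a - b := mul_le_of_le_one_right (by linarith) hle
    have hsq : ((a - b) * ‖ζ‖) ^ 2 ≤ (a + b) ^ 2 :=
      pow_le_pow_left₀ (by have := norm_nonneg ζ; nlinarith) (by linarith) 2
    apply mul_nonneg_of_nonpos_of_nonpos
    · nlinarith [norm_nonneg ζ]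
    · nlinarith
  nlinarith

theorem norm_lt_one_or_of_one_lt_ellipse_joukowski (hb : 0 < b) (hba : b < a) {ζ : ℂ}
    (h : 1 < (joukowski a b ζ).re ^ 2 / a ^ 2 + (joukowski a b ζ).im ^ 2 / b ^ 2) :
    ‖ζ‖ < 1 ∨ a + b < (a - b) * ‖ζ‖ := by
  have hζ : ζ ≠ 0 := by
    rintro rfl
    simp [joukowski] at h
    linarith
  obtain ⟨w, hw, hsign⟩ := ellipse_joukowski_sub_one_eq_mul_pos hb hba hζ
  by_contra! hmid
  have : (‖ζ‖ ^ 2 - 1) * ((a - b) ^ 2 * ‖ζ‖ ^ 2 - (a + b) ^ 2) ≤ 0 := by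
    have hsq : ((a - b) * ‖ζ‖) ^ 2 ≤ (a + b) ^ 2 :=
      pow_le_pow_left₀ (by have := norm_nonneg ζ; nlinarith) hmid.2 2
    apply mul_nonpos_of_nonneg_of_nonpos
    · nlinarith
    · nlinarith
  nlinarith

theorem exists_roots_joukowskiQuadratic_eq_pair (hb : 0 < b) (hba : b < a) (z : ℂ) :
    ∃ r₁ r₂, (joukowskiQuadratic a b z).roots = {r₁, r₂} ∧ (a - b) * (‖r₁‖ * ‖r₂‖) = a + b := by
  have hs : (0 : ℝ) < a + b := by linarith
  have hd : (0 : ℝ) < a - b := by linarith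
  have hlead : (a : ℂ) ^ 2 - (b : ℂ) ^ 2 ≠ 0 := by
    rw [← ofReal_pow, ← ofReal_pow, ← ofReal_sub, ofReal_ne_zero]
    nlinarith
  have hquad : joukowskiQuadratic a b z = C ((a : ℂ) ^ 2 - (b : ℂ) ^ 2) * X ^ 2 +
      C (-(2 * ((a : ℂ) + b) * z)) * X + C (((a : ℂ) + b) ^ 2) := by
    rw [joukowskiQuadratic, C_neg, neg_mul, sub_eq_add_neg]
  obtain ⟨r₁, r₂, hroots⟩ := exists_roots_quadratic_eq_pair (b := -(2 * ((a : ℂ) + b) * z))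
    (c := ((a : ℂ) + b) ^ 2) hlead
  refine ⟨r₁, r₂, hquad ▸ hroots, ?_⟩
  have hvieta :
      ((a + b : ℝ) : ℂ) * (a + b : ℝ) = ((a + b : ℝ) : ℂ) * ((a - b : ℝ) * (r₁ * r₂)) := by
    push_cast
    linear_combination eq_mul_mul_of_roots_quadratic_eq_pair hroots
  have := congrArg norm (mul_left_cancel₀ (by exact_mod_cast hs.ne') hvieta)
  rwa [norm_mul, norm_mul, norm_real, norm_real, Real.norm_of_nonneg hs.le,
    Real.norm_of_nonneg hd.le, eq_comm] at this

theorem ne_zero_and_joukowski_eq_of_mem_roots (hs : (a : ℂ) + b ≠ 0) {z r : ℂ}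
    (hr : r ∈ (joukowskiQuadratic a b z).roots) : r ≠ 0 ∧ joukowski a b r = z := by
  have hroot := (mem_roots'.mp hr).2
  have hr0 : r ≠ 0 := by
    rintro rfl
    simp [joukowskiQuadratic, hs] at hroot
  exact ⟨hr0, (eval_joukowskiQuadratic_eq_zero_iff hs hr0).mp hroot⟩

theorem one_lt_norm_of_mem_roots_joukowskiQuadratic (hb : 0 < b) (hba : b < a) {z r : ℂ}
    (hin : z.re ^ 2 / a ^ 2 + z.im ^ 2 / b ^ 2 < 1) (hr : r ∈ (joukowskiQuadratic a b z).roots) :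
    1 < ‖r‖ := by
  obtain ⟨hr0, hrz⟩ :=
    ne_zero_and_joukowski_eq_of_mem_roots (by exact_mod_cast (by linarith : a + b ≠ 0)) hr
  exact one_lt_norm_of_ellipse_joukowski_lt_one hb hba hr0 (hrz ▸ hin)

theorem exists_roots_joukowskiQuadratic_eq_pair_norm_lt_one_lt (hb : 0 < b) (hba : b < a) {z : ℂ}
    (hout : 1 < z.re ^ 2 / a ^ 2 + z.im ^ 2 / b ^ 2) :
    ∃ r₁ r₂, (joukowskiQuadratic a b z).roots = {r₁, r₂} ∧ ‖r₁‖ < 1 ∧ 1 < ‖r₂‖ := by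
  obtain ⟨r₁, r₂, hroots, hprod⟩ := exists_roots_joukowskiQuadratic_eq_pair hb hba z
  have hdich : ∀ r ∈ (joukowskiQuadratic a b z).roots, ‖r‖ < 1 ∨ a + b < (a - b) * ‖r‖ := by
    intro r hr
    obtain ⟨-, hrz⟩ :=
      ne_zero_and_joukowski_eq_of_mem_roots (by exact_mod_cast (by linarith : a + b ≠ 0)) hr
    exact norm_lt_one_or_of_one_lt_ellipse_joukowski hb hba (hrz ▸ hout)
  have hd : 0 < a - b := by linarith
  have hn₁ := norm_nonneg r₁
  have hn₂ := norm_nonneg r₂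
  rcases hdich r₁ (by simp [hroots]) with h₁ | h₁
  · refine ⟨r₁, r₂, hroots, h₁, ?_⟩
    by_contra! h₂
    nlinarith [mul_le_of_le_one_right hn₁ h₂]
  · refine ⟨r₂, r₁, hroots.trans (Multiset.pair_comm _ _), ?_, by nlinarith⟩
    nlinarith

end

/-- For `z` in ℂ, the roots of the quadratic `p_z(ζ) = c²ζ² - 2(a+b)zζ + (a+b)²` are exactly
the nonzero solutions of `f(ζ) = z` for the Joukowski map `f`. If `z` is strictly inside the
ellipse, both roots (with multiplicity) have modulus `> 1`; if `z` is strictly outside, there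
is exactly one root of modulus `> 1` and exactly one of modulus `< 1` (with multiplicity).
Consequently the counting function `ρ(z)` of the exterior of the unit disk under `f` equals
`2` inside the ellipse and `1` outside. -/
theorem joukowski_counting_function (a b c : ℝ) (hab : b < a) (hb : 0 < b)
    (hc : c = Real.sqrt (a ^ 2 - b ^ 2))
    (f : ℂ → ℂ)
    (hf : ∀ ζ : ℂ, f ζ = ((c : ℂ) ^ 2 * ζ ^ 2 + ((a : ℂ) + b) ^ 2) / (2 * ((a : ℂ) + b) * ζ))
    (z : ℂ) (P : Polynomial ℂ)
    (hP : P = C ((c : ℂ) ^ 2) * X ^ 2 - C (2 * ((a : ℂ) + b) * z) * X + C (((a : ℂ) + b) ^ 2)) :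
    (∀ ζ : ℂ, ζ ≠ 0 → (P.eval ζ = 0 ↔ f ζ = z)) ∧
    (z.re ^ 2 / a ^ 2 + z.im ^ 2 / b ^ 2 < 1 →
      (∀ ζ ∈ P.roots, 1 < ‖ζ‖) ∧
      Multiset.card (P.roots.filter fun ζ => 1 < ‖ζ‖) = 2) ∧
    (1 < z.re ^ 2 / a ^ 2 + z.im ^ 2 / b ^ 2 →
      Multiset.card (P.roots.filter fun ζ => 1 < ‖ζ‖) = 1 ∧
      Multiset.card (P.roots.filter fun ζ => ‖ζ‖ < 1) = 1) := by
  have hs : (a : ℂ) + b ≠ 0 := by exact_mod_cast (by linarith : a + b ≠ 0)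
  have hc2 : (c : ℂ) ^ 2 = (a : ℂ) ^ 2 - (b : ℂ) ^ 2 := by
    rw [hc, ← Complex.ofReal_pow, Real.sq_sqrt (by nlinarith)]
    push_cast
    ring
  obtain rfl : P = joukowskiQuadratic a b z := by rw [hP, hc2, joukowskiQuadratic]
  obtain rfl : f = joukowski a b := funext fun ζ => by rw [hf, hc2, joukowski_eq_div hs]
  refine ⟨fun ζ hζ => eval_joukowskiQuadratic_eq_zero_iff hs hζ, fun hin => ?_, fun hout => ?_⟩
  · have hall := fun r (hr : r ∈ (joukowskiQuadratic a b z).roots) =>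
      one_lt_norm_of_mem_roots_joukowskiQuadratic hb hab hin hr
    obtain ⟨r₁, r₂, hroots, -⟩ := exists_roots_joukowskiQuadratic_eq_pair hb hab z
    refine ⟨hall, ?_⟩
    rw [Multiset.filter_eq_self.mpr hall, hroots, Multiset.card_pair]
  · obtain ⟨r₁, r₂, hroots, h₁, h₂⟩ :=
      exists_roots_joukowskiQuadratic_eq_pair_norm_lt_one_lt hb hab hout
    rw [hroots]
    exact Multiset.card_filter_pair_of_norm_lt_one_lt h₁ h₂
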